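/- Let G be a bipartite graph with no isolated vertices on n vertices. Then γ_t(G) = n − Δ(G) + 1 if and only if G is a disjoint union of one star K_{1,t} (with t = Δ(G)) and r ≥ 0 copies of K_2. -/

import Mathlib

/-!
Let `v` be a vertex of maximum degree `Δ`. If two distinct non-neighbours of `v` (`v` itself
included) had a common neighbour `c`, one could totally dominate all non-neighbours of `v` by
picking a neighbour of each, with `c` serving both; adding `v` then gives a total dominating set
of size at most `n - Δ`. So if `γ_t = n - Δ + 1`, the non-neighbours of `v` form an open packing
(their open neighbourhoods are pairwise disjoint). In a triangle-free graph this forces every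
vertex other than `v` to have exactly one neighbour, i.e. `G` is `K_{1,Δ}` plus a perfect matching.

Conversely, an open packing is never larger than a total dominating set, and in `K_{1,t} + r K_2`
the centre, one leaf and the `2r` matched vertices form an open packing that totally dominates, so
`γ_t = 2r + 2 = n - t + 1`.
-/

/-- A total dominating set: every vertex has a neighbor in `S`. -/
def SimpleGraph.TotalDominatingSet {V : Type*} (G : SimpleGraph V) (S : Set V) : Prop :=
  ∀ v : V, ∃ u ∈ S, G.Adj v u

/-- The total domination number: minimum cardinality of a total dominating set. -/
noncomputable def SimpleGraph.totalDominationNumber {V : Type*} (G : SimpleGraph V) : ℕ :=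
  sInf {k | ∃ S : Set V, G.TotalDominatingSet S ∧ S.ncard = k}

/-- The star `K_{1,t}` with center `0` and `t` leaves. -/
def starGraph (t : ℕ) : SimpleGraph (Fin (t + 1)) where
  Adj i j := i ≠ j ∧ (i = 0 ∨ j = 0)
  symm := ⟨fun i j h => ⟨h.1.symm, h.2.symm⟩⟩
  loopless := ⟨fun i h => h.1 rfl⟩

/-- The disjoint union of a star `K_{1,t}` and `r` copies of `K_2`. -/
def starPlusMatching (t r : ℕ) : SimpleGraph (Fin (t + 1) ⊕ Fin r × Fin 2) where
  Adj x y :=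
    match x, y with
    | Sum.inl i, Sum.inl j => i ≠ j ∧ (i = 0 ∨ j = 0)
    | Sum.inr p, Sum.inr q => p.1 = q.1 ∧ p.2 ≠ q.2
    | _, _ => False
  symm := by
    refine ⟨?_⟩
    rintro (i | p) (j | q) h
    · exact ⟨h.1.symm, h.2.symm⟩
    · exact h.elim
    · exact h.elim
    · exact ⟨h.1.symm, h.2.symm⟩
  loopless := by
    refine ⟨?_⟩
    rintro (i | p) h
    · exact h.1 rfl
    · exact h.2 rfl

namespace SimpleGraph

variable {V W : Type*} {G : SimpleGraph V}

def IsOpenPacking (G : SimpleGraph V) (D : Set V) : Prop :=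
  ∀ ⦃a⦄, a ∈ D → ∀ ⦃b⦄, b ∈ D → ∀ ⦃c⦄, G.Adj a c → G.Adj b c → a = b

theorem totalDominationNumber_le_ncard {S : Set V} (hS : G.TotalDominatingSet S) :
    G.totalDominationNumber ≤ S.ncard :=
  Nat.sInf_le ⟨S, hS, rfl⟩

theorem TotalDominatingSet.image {H : SimpleGraph W} (e : G ≃g H) {S : Set V}
    (hS : G.TotalDominatingSet S) : H.TotalDominatingSet (e '' S) := by
  intro w
  obtain ⟨u, hu, hadj⟩ := hS (e.symm w)
  exact ⟨e u, Set.mem_image_of_mem e hu, by simpa using e.map_adj_iff.2 hadj⟩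

theorem Iso.totalDominationNumber_eq {H : SimpleGraph W} (e : G ≃g H) :
    G.totalDominationNumber = H.totalDominationNumber := by
  unfold totalDominationNumber
  congr 1
  ext k
  constructor
  · rintro ⟨S, hS, rfl⟩
    exact ⟨e '' S, hS.image e, Set.ncard_image_of_injective _ e.injective⟩
  · rintro ⟨S, hS, rfl⟩
    exact ⟨e.symm '' S, hS.image e.symm, Set.ncard_image_of_injective _ e.symm.injective⟩

theorem IsOpenPacking.ncard_le_ncard {D S : Set V} (hD : G.IsOpenPacking D)
    (hS : G.TotalDominatingSet S) (hSfin : S.Finite) : D.ncard ≤ S.ncard := by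
  choose f hfS hf using hS
  exact Set.ncard_le_ncard_of_injOn f (fun a _ => hfS a)
    (fun a ha b hb hab => hD ha hb (hf a) (hab ▸ hf b)) hSfin

theorem totalDominationNumber_eq_ncard [Finite V] {D : Set V} (hS : G.TotalDominatingSet D)
    (hD : G.IsOpenPacking D) : G.totalDominationNumber = D.ncard :=
  (totalDominationNumber_le_ncard hS).antisymm <| le_csInf ⟨_, D, hS, rfl⟩ <| by
    rintro _ ⟨S, hS, rfl⟩
    exact hD.ncard_le_ncard hS S.toFinite

theorem isOpenPacking_compl_neighborSet [Fintype V] [DecidableRel G.Adj]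
    (hiso : ∀ v, ∃ u, G.Adj v u) {v : V}
    (hγ : Fintype.card V - G.degree v < G.totalDominationNumber) :
    G.IsOpenPacking (G.neighborSet v)ᶜ := by
  classical
  intro d₁ h₁ d₂ h₂ c hc₁ hc₂
  by_contra hne
  choose f hf using hiso
  set D := (G.neighborFinset v)ᶜ
  set S := insert v (insert c ((D \ {d₁, d₂}).image f))
  have hS : G.TotalDominatingSet (S : Set V) := by
    intro w
    by_cases hvw : G.Adj v w
    · exact ⟨v, by simp [S], hvw.symm⟩
    by_cases hw : w = d₁ ∨ w = d₂
    · exact ⟨c, by simp [S], by rcases hw with rfl | rfl <;> assumption⟩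
    · refine ⟨f w, ?_, hf w⟩
      simp only [S, D, Finset.coe_insert, Finset.coe_image, Set.mem_insert_iff]
      exact Or.inr (Or.inr ⟨w, by simp_all, rfl⟩)
  have hpair : {d₁, d₂} ⊆ D := by
    simp_all [Finset.insert_subset_iff, D]
  have hD₂ : 2 ≤ D.card := Finset.card_pair hne ▸ Finset.card_le_card hpair
  have hSD : S.card ≤ D.card :=
    calc S.card ≤ (D \ {d₁, d₂}).card + 2 := by
          grw [Finset.card_insert_le, Finset.card_insert_le, Finset.card_image_le]
      _ = D.card := by rw [Finset.card_sdiff_of_subset hpair, Finset.card_pair hne]; omega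
  have hD : D.card = Fintype.card V - G.degree v := by
    simp [D, Finset.card_compl]
  have := totalDominationNumber_le_ncard hS
  rw [Set.ncard_coe_finset] at this
  omega

theorem existsUnique_adj_of_isOpenPacking_compl_neighborSet (hG : G.CliqueFree 3)
    (hiso : ∀ v, ∃ u, G.Adj v u) {v : V} (hv : G.IsOpenPacking (G.neighborSet v)ᶜ)
    {w : V} (hw : w ≠ v) : ∃! u, G.Adj w u := by
  have hleaf : ∀ ⦃x y⦄, G.Adj v x → G.Adj x y → y = v := fun x y hvx hxy =>
    hv (fun hvy => isIndepSet_neighborSet_of_triangleFree G hG v hvx hvy hxy.ne hxy)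
      (G.loopless.irrefl v) hxy.symm hvx
  obtain ⟨u, hu⟩ := hiso w
  refine ⟨u, hu, fun y hy => ?_⟩
  by_cases hvw : G.Adj v w
  · exact (hleaf hvw hy).trans (hleaf hvw hu).symm
  · exact hv (fun h => hw (hleaf h hy.symm)) (fun h => hw (hleaf h hu.symm)) hy.symm hu.symm

def isoSumInduceCompl (s : Set V) [DecidablePred (· ∈ s)]
    (hs : ∀ ⦃a b⦄, G.Adj a b → a ∈ s → b ∈ s) : G ≃g G.induce s ⊕g G.induce sᶜ where
  toEquiv := (Equiv.sumCompl (· ∈ s)).symm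
  map_rel_iff' {a b} := by
    by_cases ha : a ∈ s <;> by_cases hb : b ∈ s
    · simp [Equiv.sumCompl_symm_apply_of_pos ha, Equiv.sumCompl_symm_apply_of_pos hb]
    · simp [Equiv.sumCompl_symm_apply_of_pos ha, Equiv.sumCompl_symm_apply_of_neg hb]
      exact fun h => hb (hs h ha)
    · simp [Equiv.sumCompl_symm_apply_of_neg ha, Equiv.sumCompl_symm_apply_of_pos hb]
      exact fun h => ha (hs h.symm hb)
    · simp [Equiv.sumCompl_symm_apply_of_neg ha, Equiv.sumCompl_symm_apply_of_neg hb]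

theorem induce_insert_neighborSet_eq_starGraph {v : V}
    (hleaf : ∀ ⦃x y⦄, G.Adj v x → G.Adj x y → y = v) :
    G.induce (insert v (G.neighborSet v)) = starGraph ⟨v, Set.mem_insert _ _⟩ := by
  ext ⟨a, ha⟩ ⟨b, hb⟩
  simp only [Set.mem_insert_iff, mem_neighborSet] at ha hb
  simp only [comap_adj, Function.Embedding.subtype_apply, starGraph_adj, ne_eq, Subtype.mk.injEq]
  constructor
  · intro h
    exact ⟨h.ne, ha.imp_right fun hva => hleaf hva h⟩
  · rintro ⟨hne, rfl | rfl⟩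
    · exact hb.resolve_left (Ne.symm hne)
    · exact (ha.resolve_left hne).symm

theorem nonempty_starGraph_iso_starGraph [Fintype V] [Fintype W] [DecidableEq W]
    (h : Fintype.card V = Fintype.card W) (r : V) (s : W) :
    Nonempty (starGraph r ≃g starGraph s) := by
  let e := (Fintype.equivOfCardEq h).trans (Equiv.swap (Fintype.equivOfCardEq h r) s)
  have he : e r = s := by simp [e]
  exact ⟨{ toEquiv := e, map_rel_iff' := by simp [← he] }⟩

theorem exists_iso_bot_boxProd_top [Fintype V] (hG : G.Colorable 2)
    (hunique : ∀ v, ∃! u, G.Adj v u) :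
    ∃ r, Nonempty (G ≃g (⊥ : SimpleGraph (Fin r)) □ (⊤ : SimpleGraph (Fin 2))) := by
  classical
  obtain ⟨c⟩ := hG
  choose m hm hmu using hunique
  have hadj : ∀ a b, G.Adj a b ↔ b = m a := fun a b => ⟨hmu a b, fun h => h ▸ hm a⟩
  have hmm : ∀ v, m (m v) = v := fun v => (hmu _ _ (hm v).symm).symm
  have hc : ∀ v, c (m v) = c v + 1 := fun v => by have := c.valid (hm v); omega
  have hc01 : ∀ v, c v = 0 ∨ c v = 1 := fun v => by omega
  -- an edge `{v, m v}` is named by its endpoint of colour `0`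
  let rep : V → {v // c v = 0} := fun v =>
    if hv : c v = 0 then ⟨v, hv⟩ else ⟨m v, by rw [hc]; omega⟩
  have hrep : ∀ v, rep v = if c v = 0 then v else m v := fun v => by
    by_cases hv : c v = 0 <;> simp [rep, hv]
  have hrep_m : ∀ v, rep (m v) = rep v := fun v => by
    obtain hv | hv := hc01 v <;> simp [Subtype.ext_iff, hrep, hv, hc, hmm]
  let e : V ≃ {v // c v = 0} × Fin 2 :=
    { toFun := fun v => (rep v, c v)
      invFun := fun p => if p.2 = 0 then p.1 else m p.1
      left_inv := fun v => by obtain hv | hv := hc01 v <;> simp [hrep, hv, hmm]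
      right_inv := fun ⟨⟨v, hv⟩, i⟩ => by
        obtain hi | hi : i = 0 ∨ i = 1 := by omega
        all_goals simp [Subtype.ext_iff, hrep, hi, hv, hc, hmm] }
  have hrep_adj : ∀ a b, c a ≠ c b ∧ rep a = rep b ↔ b = m a := fun a b => by
    constructor
    · rintro ⟨hab, hrab⟩
      simp only [Subtype.ext_iff, hrep] at hrab
      obtain ha | ha := hc01 a <;> obtain hb | hb := hc01 b <;> simp_all
    · rintro rfl
      simp [hc, hrep_m]
  refine ⟨_, ⟨{ toEquiv := e.trans ((Fintype.equivFin _).prodCongr (Equiv.refl _))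
                map_rel_iff' := fun {a b} => ?_ }⟩⟩
  simpa [boxProd_adj, e, hadj] using hrep_adj a b

end SimpleGraph

open SimpleGraph

section starPlusMatching

variable {t r : ℕ}

@[simp]
theorem starPlusMatching_adj_inl_inl {i j : Fin (t + 1)} :
    (starPlusMatching t r).Adj (.inl i) (.inl j) ↔ i ≠ j ∧ (i = 0 ∨ j = 0) :=
  Iff.rfl

@[simp]
theorem starPlusMatching_adj_inr_inr {p q : Fin r × Fin 2} :
    (starPlusMatching t r).Adj (.inr p) (.inr q) ↔ p.1 = q.1 ∧ p.2 ≠ q.2 :=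
  Iff.rfl

@[simp]
theorem not_starPlusMatching_adj_inl_inr {i : Fin (t + 1)} {p : Fin r × Fin 2} :
    ¬(starPlusMatching t r).Adj (.inl i) (.inr p) :=
  id

@[simp]
theorem not_starPlusMatching_adj_inr_inl {i : Fin (t + 1)} {p : Fin r × Fin 2} :
    ¬(starPlusMatching t r).Adj (.inr p) (.inl i) :=
  id

theorem starPlusMatching_eq_sum (t r : ℕ) :
    starPlusMatching t r =
      SimpleGraph.starGraph 0 ⊕g ((⊥ : SimpleGraph (Fin r)) □ (⊤ : SimpleGraph (Fin 2))) := by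
  ext (i | p) (j | q) <;> simp [boxProd_adj, and_comm]

theorem totalDominationNumber_starPlusMatching (ht : t ≠ 0) :
    (starPlusMatching t r).totalDominationNumber = 2 * r + 2 := by
  have hlast : Fin.last t ≠ 0 := by simpa [Fin.ext_iff] using ht
  set D : Set (Fin (t + 1) ⊕ Fin r × Fin 2) :=
    insert (.inl 0) (insert (.inl (Fin.last t)) (Set.range .inr))
  have hS : (starPlusMatching t r).TotalDominatingSet D := by
    rintro (i | ⟨a, b⟩)
    · by_cases hi : i = 0
      · exact ⟨.inl (Fin.last t), by simp [D], by simp [hi, hlast.symm]⟩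
      · exact ⟨.inl 0, by simp [D], by simp [hi]⟩
    · exact ⟨.inr (a, b + 1), by simp [D], by simp⟩
  have hD : (starPlusMatching t r).IsOpenPacking D := by
    rintro a ha b hb (j | ⟨p, k⟩) hac hbc <;>
    · simp only [D, Set.mem_insert_iff, Set.mem_range] at ha hb
      rcases ha with rfl | rfl | ⟨⟨a₁, a₂⟩, rfl⟩ <;> rcases hb with rfl | rfl | ⟨⟨b₁, b₂⟩, rfl⟩ <;>
        simp at hac hbc ⊢ <;> grind
  rw [totalDominationNumber_eq_ncard hS hD, Set.ncard_insert_of_notMem (by simp [hlast.symm]),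
    Set.ncard_insert_of_notMem (by simp), Set.ncard_range_of_injective Sum.inr_injective]
  simp [mul_comm]

end starPlusMatching

theorem SimpleGraph.exists_iso_starPlusMatching {V : Type*} [Fintype V] {G : SimpleGraph V}
    [DecidableRel G.Adj] (hG : G.Colorable 2) {v : V} (hv : ∀ w ≠ v, ∃! u, G.Adj w u) :
    ∃ r, Nonempty (G ≃g starPlusMatching (G.degree v) r) := by
  classical
  have hleaf : ∀ ⦃x y⦄, G.Adj v x → G.Adj x y → y = v := fun x y hvx hxy =>
    (hv x hvx.ne').unique hxy hvx.symm
  set P := insert v (G.neighborSet v)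
  have hP : ∀ ⦃a b⦄, G.Adj a b → a ∈ P → b ∈ P := by
    rintro a b hab (rfl | ha)
    · exact Or.inr hab
    · exact Or.inl (hleaf ha hab)
  obtain ⟨eS⟩ : Nonempty (G.induce P ≃g SimpleGraph.starGraph (0 : Fin (G.degree v + 1))) := by
    rw [induce_insert_neighborSet_eq_starGraph hleaf]
    refine nonempty_starGraph_iso_starGraph ?_ _ _
    rw [Fintype.card_fin, ← card_neighborSet_eq_degree]
    exact Set.card_insert (G.neighborSet v) (G.loopless.irrefl v)
  have hM : ∀ w : ↥Pᶜ, ∃! u, (G.induce Pᶜ).Adj w u := by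
    rintro ⟨w, hw⟩
    obtain ⟨u, hu, huniq⟩ := hv w fun h => hw (h ▸ Set.mem_insert v _)
    exact ⟨⟨u, fun h => hw (hP hu.symm h)⟩, hu, fun y hy => Subtype.ext (huniq y hy)⟩
  obtain ⟨r, ⟨eM⟩⟩ := exists_iso_bot_boxProd_top (hG.of_hom (Embedding.induce _).toHom) hM
  refine ⟨r, ?_⟩
  rw [starPlusMatching_eq_sum]
  exact ⟨(isoSumInduceCompl P hP).trans (eS.sumCongr eM)⟩

theorem bipartite_total_domination_eq_iff
    {V : Type*} [Fintype V] (G : SimpleGraph V) [DecidableRel G.Adj]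
    (hbip : G.Colorable 2) (hiso : ∀ v : V, ∃ u : V, G.Adj v u) :
    G.totalDominationNumber = Fintype.card V - G.maxDegree + 1 ↔
      ∃ r : ℕ, Nonempty (G ≃g starPlusMatching G.maxDegree r) := by
  constructor
  · intro h
    have : Nonempty V := by
      by_contra hV
      have := G.totalDominationNumber_le_ncard (S := ∅) fun v => (hV ⟨v⟩).elim
      simp_all
    obtain ⟨v, hv⟩ := G.exists_maximal_degree_vertex
    have hγ : Fintype.card V - G.degree v < G.totalDominationNumber := by omega
    rw [hv]
    exact exists_iso_starPlusMatching hbip fun w hw =>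
      existsUnique_adj_of_isOpenPacking_compl_neighborSet (hbip.cliqueFree (by norm_num)) hiso
        (isOpenPacking_compl_neighborSet hiso hγ) hw
  · rintro ⟨r, ⟨e⟩⟩
    have hcard : Fintype.card V = G.maxDegree + 1 + 2 * r := by
      simp [Fintype.card_congr e.toEquiv, mul_comm]
    obtain ⟨v⟩ : Nonempty V := Fintype.card_pos_iff.mp (by omega)
    have hΔ : G.maxDegree ≠ 0 :=
      (G.degree_pos_iff_exists_adj v |>.mpr (hiso v)).trans_le (G.degree_le_maxDegree v) |>.ne'
    rw [e.totalDominationNumber_eq, totalDominationNumber_starPlusMatching hΔ, hcard]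
    omega
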